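/- Let R be a commutative local ring and n ≥ 1. Then every matrix in SL_n(R) is a product of elementary matrices (transvections), i.e. the special linear group SL_n(R) is generated by the elementary matrices I + λ·E_{ij} with i ≠ j and λ ∈ R. -/

import Mathlib

/-!
Over a local ring every column of a matrix in `SL_n` contains a unit: otherwise the column
vanishes in the residue field, where the determinant is still `1`. With a unit in the first
column, at most two row operations make the `(0, 0)` entry equal to `1`. Row operations then
clear the first column; transposing and doing the same clears the first row, and what is left
is `diag(1, B)` with `B ∈ SL_{n-1}`, which is handled by induction on `n`.
-/

namespace Matrix

variable {ι R : Type*} [Fintype ι] [DecidableEq ι] [CommRing R] {m : ℕ}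

def oneBlockDiag (M : Matrix (Fin m) (Fin m) R) :
    Matrix (Fin (m + 1)) (Fin (m + 1)) R :=
  of (Fin.cons (Pi.single 0 1) fun i => Fin.cons 0 (M i))

section oneBlockDiag

variable (M N : Matrix (Fin m) (Fin m) R)

@[simp] lemma oneBlockDiag_zero_zero : oneBlockDiag M 0 0 = 1 := rfl

@[simp] lemma oneBlockDiag_zero_succ (j : Fin m) : oneBlockDiag M 0 j.succ = 0 := by
  simp [oneBlockDiag]

@[simp] lemma oneBlockDiag_succ_zero (i : Fin m) : oneBlockDiag M i.succ 0 = 0 :=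
  rfl

@[simp] lemma oneBlockDiag_succ_succ (i j : Fin m) :
    oneBlockDiag M i.succ j.succ = M i j := rfl

@[simp] lemma oneBlockDiag_submatrix_succ :
    (oneBlockDiag M).submatrix Fin.succ Fin.succ = M := rfl

lemma oneBlockDiag_one : oneBlockDiag (1 : Matrix (Fin m) (Fin m) R) = 1 := by
  ext i j
  cases i using Fin.cases <;> cases j using Fin.cases <;>
    simp [one_apply, (Fin.succ_ne_zero _).symm]

lemma oneBlockDiag_mul : oneBlockDiag (M * N) = oneBlockDiag M * oneBlockDiag N := by
  ext i j
  cases i using Fin.cases <;> cases j using Fin.cases <;>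
    simp [mul_apply, Fin.sum_univ_succ]

lemma det_oneBlockDiag : (oneBlockDiag M).det = M.det := by
  rw [det_succ_row_zero, Fin.sum_univ_succ]
  simp [Fin.succAbove_zero]

lemma oneBlockDiag_one_add_single (i j : Fin m) (c : R) :
    oneBlockDiag (1 + single i j c) = 1 + single i.succ j.succ c := by
  ext a b
  cases a using Fin.cases <;> cases b using Fin.cases <;>
    simp [one_apply, single_apply, (Fin.succ_ne_zero _).symm]

lemma eq_oneBlockDiag_submatrix {A : Matrix (Fin (m + 1)) (Fin (m + 1)) R}
    (h00 : A 0 0 = 1) (hrow : ∀ j ≠ 0, A 0 j = 0) (hcol : ∀ i ≠ 0, A i 0 = 0) :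
    A = oneBlockDiag (A.submatrix Fin.succ Fin.succ) := by
  ext i j
  cases i using Fin.cases <;> cases j using Fin.cases <;>
    simp [h00, hrow _ (Fin.succ_ne_zero _), hcol _ (Fin.succ_ne_zero _)]

end oneBlockDiag

namespace SpecialLinearGroup

variable (ι R) in
def elementarySubgroup : Subgroup (SpecialLinearGroup ι R) :=
  Subgroup.closure {M | ∃ (i j : ι) (c : R), i ≠ j ∧ (M : Matrix ι ι R) = 1 + single i j c}

lemma transvection_mem_elementarySubgroup {i j : ι} (hij : i ≠ j) (c : R) :
    transvection hij c ∈ elementarySubgroup ι R :=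
  Subgroup.subset_closure ⟨i, j, c, hij, rfl⟩

lemma transvection_mul_apply_same {i j : ι} (hij : i ≠ j) (c : R) (A : SpecialLinearGroup ι R)
    (b : ι) : (transvection hij c * A) i b = A i b + c * A j b :=
  Matrix.transvection_mul_apply_same i j b c A

lemma transvection_mul_apply_of_ne {i j : ι} (hij : i ≠ j) (c : R) (A : SpecialLinearGroup ι R)
    {a : ι} (ha : a ≠ i) (b : ι) : (transvection hij c * A) a b = A a b :=
  Matrix.transvection_mul_apply_of_ne i j a b ha c A

lemma transpose_mem_elementarySubgroup {A : SpecialLinearGroup ι R}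
    (hA : A ∈ elementarySubgroup ι R) : Aᵀ ∈ elementarySubgroup ι R := by
  induction hA using Subgroup.closure_induction with
  | mem A hA =>
    obtain ⟨i, j, c, hij, hA⟩ := hA
    exact Subgroup.subset_closure ⟨j, i, c, hij.symm, by simp [hA, transpose_single]⟩
  | one => exact (Subtype.ext transpose_one : (1 : SpecialLinearGroup ι R)ᵀ = 1) ▸ one_mem _
  | mul A B _ _ hA hB =>
    rw [show (A * B)ᵀ = Bᵀ * Aᵀ from Subtype.ext (Matrix.transpose_mul _ _)]
    exact mul_mem hB hA
  | inv A _ hA =>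
    rw [show A⁻¹ᵀ = Aᵀ⁻¹ from Subtype.ext (adjugate_transpose _)]
    exact inv_mem hA

lemma exists_mem_elementarySubgroup_clear_column {p : ι} (A : SpecialLinearGroup ι R)
    (hA : A p p = 1) :
    ∃ E ∈ elementarySubgroup ι R, (E * A) p = A p ∧ ∀ i ≠ p, (E * A) i p = 0 := by
  suffices ∃ E ∈ elementarySubgroup ι R,
      (E * A) p = A p ∧ ∀ i ∈ Finset.univ.erase p, (E * A) i p = 0 by
    simpa using this
  refine Finset.induction_on' (Finset.univ.erase p) ⟨1, one_mem _, by simp, by simp⟩ ?_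
  rintro a s ha - has ⟨E, hE, hrow, hcol⟩
  have hap : a ≠ p := Finset.ne_of_mem_erase ha
  refine ⟨transvection hap (-(E * A) a p) * E,
    mul_mem (transvection_mem_elementarySubgroup _ _) hE, ?_, ?_⟩
  · rw [mul_assoc]; ext j
    rw [transvection_mul_apply_of_ne _ _ _ hap.symm, hrow]
  · intro i hi
    rw [mul_assoc]
    rcases Finset.mem_insert.1 hi with rfl | hi
    · rw [transvection_mul_apply_same, hrow, hA]; ring
    · rw [transvection_mul_apply_of_ne _ _ _ (ne_of_mem_of_not_mem hi has), hcol i hi]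

open IsLocalRing in
lemma exists_isUnit_apply [IsLocalRing R] (A : SpecialLinearGroup ι R) (j : ι) :
    ∃ i, IsUnit (A i j) := by
  by_contra! h
  have hcol : ∀ i, (map (residue R) A : Matrix ι ι (ResidueField R)) i j = 0 := fun i =>
    (residue_eq_zero_iff _).2 ((mem_maximalIdeal _).2 (h i))
  simpa using (det_eq_zero_of_column_eq_zero j hcol).symm.trans (map _ A).det_coe

lemma exists_transvection_mul_apply_eq_one {i k j : ι} (hki : k ≠ i)
    {A : SpecialLinearGroup ι R} (hA : IsUnit (A i j)) :
    ∃ c : R, (transvection hki c * A) k j = 1 := by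
  obtain ⟨u, hu⟩ := hA
  refine ⟨(1 - A k j) * ↑u⁻¹, ?_⟩
  rw [transvection_mul_apply_same, ← hu, mul_assoc, Units.inv_mul, mul_one]
  ring

lemma exists_mem_elementarySubgroup_mul_apply_eq_one [IsLocalRing R] [Nontrivial ι]
    (A : SpecialLinearGroup ι R) (k j : ι) :
    ∃ E ∈ elementarySubgroup ι R, (E * A) k j = 1 := by
  obtain ⟨E, hE, i, hik, hi⟩ :
      ∃ E ∈ elementarySubgroup ι R, ∃ i ≠ k, IsUnit ((E * A) i j) := by
    obtain ⟨i, hi⟩ := exists_isUnit_apply A j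
    by_cases hik : i = k
    · obtain ⟨k', hk'⟩ := exists_ne k
      obtain ⟨c, hc⟩ := exists_transvection_mul_apply_eq_one hk' (hik ▸ hi)
      exact ⟨_, transvection_mem_elementarySubgroup hk' c, k', hk', hc.symm ▸ isUnit_one⟩
    · exact ⟨1, one_mem _, i, hik, by rwa [one_mul]⟩
  obtain ⟨c, hc⟩ := exists_transvection_mul_apply_eq_one hik.symm hi
  exact ⟨_, mul_mem (transvection_mem_elementarySubgroup _ c) hE, by rwa [mul_assoc]⟩

def oneBlockDiagHom : SpecialLinearGroup (Fin m) R →* SpecialLinearGroup (Fin (m + 1)) R where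
  toFun M := ⟨oneBlockDiag M, by rw [det_oneBlockDiag, M.det_coe]⟩
  map_one' := Subtype.ext <| by simp only [coe_one, oneBlockDiag_one]
  map_mul' M N := Subtype.ext (oneBlockDiag_mul M.1 N.1)

lemma map_oneBlockDiagHom_elementarySubgroup_le :
    (elementarySubgroup (Fin m) R).map oneBlockDiagHom ≤ elementarySubgroup (Fin (m + 1)) R := by
  rw [elementarySubgroup, MonoidHom.map_closure]
  refine Subgroup.closure_mono ?_
  rintro _ ⟨M, ⟨i, j, c, hij, hM⟩, rfl⟩
  refine ⟨i.succ, j.succ, c, Fin.succ_injective _ |>.ne hij, ?_⟩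
  change oneBlockDiag (M : Matrix (Fin m) (Fin m) R) = _
  rw [hM, oneBlockDiag_one_add_single]

lemma mem_elementarySubgroup_of_apply_zero_eq (ih : elementarySubgroup (Fin m) R = ⊤)
    {A : SpecialLinearGroup (Fin (m + 1)) R}
    (h00 : A 0 0 = 1) (hrow : ∀ j ≠ 0, A 0 j = 0) (hcol : ∀ i ≠ 0, A i 0 = 0) :
    A ∈ elementarySubgroup (Fin (m + 1)) R := by
  have hA := eq_oneBlockDiag_submatrix h00 hrow hcol
  have hdet : (A.1.submatrix Fin.succ Fin.succ).det = 1 := by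
    rw [← det_oneBlockDiag, ← hA, A.det_coe]
  exact map_oneBlockDiagHom_elementarySubgroup_le
    ⟨⟨_, hdet⟩, ih ▸ Subgroup.mem_top _, Subtype.ext hA.symm⟩

lemma mem_elementarySubgroup_of_apply_zero_zero_eq_one (ih : elementarySubgroup (Fin m) R = ⊤)
    {A : SpecialLinearGroup (Fin (m + 1)) R} (hA : A 0 0 = 1) :
    A ∈ elementarySubgroup (Fin (m + 1)) R := by
  obtain ⟨E₁, hE₁, hrow₁, hcol₁⟩ := exists_mem_elementarySubgroup_clear_column A hA
  have h00 : (E₁ * A)ᵀ 0 0 = 1 := by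
    change (E₁ * A) 0 0 = 1
    rw [hrow₁, hA]
  obtain ⟨E₂, hE₂, hrow₂, hcol₂⟩ := exists_mem_elementarySubgroup_clear_column _ h00
  have hC : E₂ * (E₁ * A)ᵀ ∈ elementarySubgroup (Fin (m + 1)) R := by
    refine mem_elementarySubgroup_of_apply_zero_eq ih (by rw [hrow₂, h00]) ?_ hcol₂
    intro j hj
    rw [congrFun hrow₂ j]
    exact hcol₁ j hj
  have hEA : (E₁ * A)ᵀᵀ ∈ elementarySubgroup (Fin (m + 1)) R :=
    transpose_mem_elementarySubgroup ((mul_mem_cancel_left hE₂).1 hC)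
  rw [show (E₁ * A)ᵀᵀ = E₁ * A from Subtype.ext (transpose_transpose _)] at hEA
  exact (mul_mem_cancel_left hE₁).1 hEA

theorem elementarySubgroup_fin_eq_top [IsLocalRing R] :
    ∀ n, elementarySubgroup (Fin n) R = ⊤
  | 0 | 1 => Subsingleton.elim _ _
  | m + 2 => by
    refine eq_top_iff.2 fun A _ => ?_
    obtain ⟨E, hE, hEA⟩ := exists_mem_elementarySubgroup_mul_apply_eq_one A 0 0
    exact (mul_mem_cancel_left hE).1 <|
      mem_elementarySubgroup_of_apply_zero_zero_eq_one (elementarySubgroup_fin_eq_top (m + 1)) hEA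

end SpecialLinearGroup

end Matrix

theorem stmt_0_general (R : Type*) [CommRing R] [IsLocalRing R] (n : ℕ) :
    Subgroup.closure
      {M : Matrix.SpecialLinearGroup (Fin n) R |
        ∃ (i j : Fin n) (c : R), i ≠ j ∧
          (M : Matrix (Fin n) (Fin n) R) = 1 + Matrix.single i j c} = ⊤ :=
  Matrix.SpecialLinearGroup.elementarySubgroup_fin_eq_top n

/-- Over a commutative local ring, `SL_n(R)` is generated by the elementary
matrices (transvections) `I + λ·E_{ij}` with `i ≠ j`. -/
theorem stmt_0 (R : Type*) [CommRing R] [IsLocalRing R] (n : ℕ) (hn : 1 ≤ n) :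
    Subgroup.closure
      {M : Matrix.SpecialLinearGroup (Fin n) R |
        ∃ (i j : Fin n) (c : R), i ≠ j ∧
          (M : Matrix (Fin n) (Fin n) R) = 1 + Matrix.single i j c} = ⊤ :=
  stmt_0_general R n
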